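/- Suppose the unit normal N is 𝔄-principal, i.e. A N = N. Then A ξ = -ξ, A maps T := {Y ∈ V : g(Y,N) = 0} into itself, and for every Y ∈ T the normal Jacobi operator satisfies R̄(Y,N)N = Y + 2 η(Y)·ξ + A Y, where η(Y) := g(Y,ξ). -/

import Mathlib

/-! Since `J` is `g`-skew and `A` is a `g`-isometry fixing `N`, every coefficient of `R̄(Y,N)N`
reduces to `g(N,N) = 1`, `g(Y,N) = 0` or `±η(Y)`; with `JAN = JN = -ξ` the `J`-terms contribute
`3η(Y)ξ` and the `JA`-terms `-η(Y)ξ`. -/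

noncomputable section

variable {V : Type*}

/-- The real inner product `g(x,y) = Re⟨x,y⟩` induced by the Hermitian inner product. -/
def g [NormedAddCommGroup V] [InnerProductSpace ℂ V] (x y : V) : ℝ := (inner ℂ x y : ℂ).re

/-- The curvature tensor of the complex quadric, modeled on a complex inner product space
with real structure `A` and complex structure `J = i·`. -/
def Rbar [NormedAddCommGroup V] [InnerProductSpace ℂ V] (A : V →ₗ[ℝ] V) (X Y Z : V) : V :=
  g Y Z • X - g X Z • Y + g (Complex.I • Y) Z • (Complex.I • X)
    - g (Complex.I • X) Z • (Complex.I • Y)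
    - (2 * g (Complex.I • X) Y) • (Complex.I • Z)
    + g (A Y) Z • A X - g (A X) Z • A Y
    + g (Complex.I • A Y) Z • (Complex.I • A X)
    - g (Complex.I • A X) Z • (Complex.I • A Y)

section RealInner

variable [NormedAddCommGroup V] [InnerProductSpace ℂ V]

open Complex

lemma g_neg_right (x y : V) : g x (-y) = -g x y := by
  simp [g]

lemma g_I_smul_left (x y : V) : g (I • x) y = -g x (I • y) := by
  simp [g]

lemma g_I_smul_self (x : V) : g (I • x) x = 0 := by
  simp [g, inner_self_eq_norm_sq_to_K, ← ofReal_pow]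

lemma g_self_of_norm_eq_one {x : V} (hx : ‖x‖ = 1) : g x x = 1 := by
  simp [g, inner_self_eq_norm_sq_to_K, hx]

variable {A : V →ₗ[ℝ] V}

lemma g_map_map (hA_herm : ∀ x y, (inner ℂ (A x) (A y) : ℂ) = inner ℂ y x) (x y : V) :
    g (A x) (A y) = g x y := by
  rw [g, hA_herm, ← inner_conj_symm, conj_re, g]

lemma g_map_left_of_map_eq_self (hA_herm : ∀ x y, (inner ℂ (A x) (A y) : ℂ) = inner ℂ y x)
    {N : V} (hAN : A N = N) (x : V) : g (A x) N = g x N := by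
  rw [← g_map_map hA_herm x N, hAN]

end RealInner

theorem stmt_6_general [NormedAddCommGroup V] [InnerProductSpace ℂ V]
    (A : V →ₗ[ℝ] V)
    (hA_antiJ : ∀ x, A (Complex.I • x) = -(Complex.I • A x))
    (hA_herm : ∀ x y, (inner ℂ (A x) (A y) : ℂ) = inner ℂ y x)
    (N : V) (hN : ‖N‖ = 1)
    (ξ : V) (hξ : ξ = -(Complex.I • N))
    (hAN : A N = N) :
    A ξ = -ξ ∧
    (∀ Y : V, g Y N = 0 → g (A Y) N = 0) ∧
    (∀ Y : V, g Y N = 0 → Rbar A Y N N = Y + (2 * g Y ξ) • ξ + A Y) := by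
  have hAξ : A ξ = -ξ := by rw [hξ, map_neg, hA_antiJ, hAN]
  have hAT : ∀ Y, g Y N = 0 → g (A Y) N = 0 := fun Y hY ↦
    (g_map_left_of_map_eq_self hA_herm hAN Y).trans hY
  refine ⟨hAξ, hAT, fun Y hY ↦ ?_⟩
  have hJY : g (Complex.I • Y) N = g Y ξ := by rw [g_I_smul_left, hξ, g_neg_right]
  have hJAY : g (Complex.I • A Y) N = -g Y ξ := calc
    g (Complex.I • A Y) N = -g (A Y) (A ξ) := by rw [g_I_smul_left, hAξ, hξ, neg_neg]
    _ = -g Y ξ := by rw [g_map_map hA_herm]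
  rw [Rbar, hAN, g_self_of_norm_eq_one hN, hY, hAT Y hY, g_I_smul_self, hJY, hJAY, hξ]
  module

/-- If the unit normal `N` is 𝔄-principal (`AN = N`), then `Aξ = -ξ`, `A` preserves the
tangent space `T = {Y : g(Y,N) = 0}`, and on `T` the normal Jacobi operator is
`R̄(Y,N)N = Y + 2η(Y)·ξ + AY`, where `η(Y) = g(Y,ξ)`. -/
theorem stmt_6 [NormedAddCommGroup V] [InnerProductSpace ℂ V]
    (A : V →ₗ[ℝ] V)
    (hA_invol : ∀ x, A (A x) = x)
    (hA_antiJ : ∀ x, A (Complex.I • x) = -(Complex.I • A x))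
    (hA_herm : ∀ x y, (inner ℂ (A x) (A y) : ℂ) = inner ℂ y x)
    (N : V) (hN : ‖N‖ = 1)
    (ξ : V) (hξ : ξ = -(Complex.I • N))
    (hAN : A N = N) :
    A ξ = -ξ ∧
    (∀ Y : V, g Y N = 0 → g (A Y) N = 0) ∧
    (∀ Y : V, g Y N = 0 → Rbar A Y N N = Y + (2 * g Y ξ) • ξ + A Y) :=
  stmt_6_general A hA_antiJ hA_herm N hN ξ hξ hAN
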